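/- Let $X$ be a Banach space and $f : [a,b] \to X$ differentiable with Bochner-integrable derivative $f'$. For any $x_1 \le x_2$ in $[a,b]$ and weights $p_1, p_2 > 0$ with $p_1 + p_2 = 1$: $p_1 f(x_1) + p_2 f(x_2) - \frac{1}{b-a}\int_a^b f(t)\,dt = \frac{1}{b-a}\left[\int_a^{x_1} (t-a) f'(t)\,dt + \int_{x_1}^{x_2} \big(t - (p_1 b + p_2 a)\big) f'(t)\,dt + \int_{x_2}^b (t-b) f'(t)\,dt\right]$. -/

import Mathlib

open MeasureTheory intervalIntegral

/-!
Integrating `(t - α) • f' t` by parts against the derivative `1` of `t - α` turns each of the three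
integrals into boundary terms minus `∫ f`. The three pieces of `∫ f` add up to `∫_a^b f`, and the
boundary terms telescope to `(c - a) • f x₁ + (b - c) • f x₂` for the middle kernel `t - c`; with
`c = p₁ b + p₂ a` and `p₁ + p₂ = 1` these coefficients are `p₁ (b - a)` and `p₂ (b - a)`.
-/

section

variable {X : Type*} [NormedAddCommGroup X] [NormedSpace ℝ X] [CompleteSpace X] {f f' : ℝ → X}

theorem integral_sub_smul_deriv_eq {u v : ℝ} (α : ℝ)
    (hf : ∀ t ∈ Set.uIcc u v, HasDerivAt f (f' t) t) (hf' : IntervalIntegrable f' volume u v) :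
    ∫ t in u..v, (t - α) • f' t = (v - α) • f v - (u - α) • f u - ∫ t in u..v, f t := by
  have hlin : ∀ t ∈ Set.uIcc u v, HasDerivAt (fun s : ℝ => s - α) 1 t :=
    fun t _ => (hasDerivAt_id t).sub_const α
  simpa only [one_smul] using
    integral_smul_deriv_eq_deriv_smul hlin hf intervalIntegrable_const hf'

theorem integral_sub_smul_deriv_three_pieces_eq {a b x₁ x₂ : ℝ} (c : ℝ)
    (hf : ∀ t ∈ Set.uIcc a b, HasDerivAt f (f' t) t) (hf' : IntervalIntegrable f' volume a b)
    (hx₁ : x₁ ∈ Set.uIcc a b) (hx₂ : x₂ ∈ Set.uIcc a b) :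
    (∫ t in a..x₁, (t - a) • f' t) + (∫ t in x₁..x₂, (t - c) • f' t) +
        (∫ t in x₂..b, (t - b) • f' t) =
      (c - a) • f x₁ + (b - c) • f x₂ - ∫ t in a..b, f t := by
  have ha : a ∈ Set.uIcc a b := Set.left_mem_uIcc
  have hb : b ∈ Set.uIcc a b := Set.right_mem_uIcc
  have hf_on : ∀ {u v}, u ∈ Set.uIcc a b → v ∈ Set.uIcc a b →
      ∀ t ∈ Set.uIcc u v, HasDerivAt f (f' t) t :=
    fun hu hv t ht => hf t (Set.uIcc_subset_uIcc hu hv ht)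
  have hf'_int : ∀ {u v}, u ∈ Set.uIcc a b → v ∈ Set.uIcc a b →
      IntervalIntegrable f' volume u v :=
    fun hu hv => hf'.mono_set (Set.uIcc_subset_uIcc hu hv)
  have hf_int : ∀ {u v}, u ∈ Set.uIcc a b → v ∈ Set.uIcc a b →
      IntervalIntegrable f volume u v :=
    fun hu hv => ContinuousOn.intervalIntegrable fun t ht =>
      (hf_on hu hv t ht).continuousAt.continuousWithinAt
  have hsplit : (∫ t in a..b, f t) =
      (∫ t in a..x₁, f t) + (∫ t in x₁..x₂, f t) + ∫ t in x₂..b, f t := by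
    rw [integral_add_adjacent_intervals (hf_int ha hx₁) (hf_int hx₁ hx₂),
      integral_add_adjacent_intervals (hf_int ha hx₂) (hf_int hx₂ hb)]
  rw [integral_sub_smul_deriv_eq a (hf_on ha hx₁) (hf'_int ha hx₁),
    integral_sub_smul_deriv_eq c (hf_on hx₁ hx₂) (hf'_int hx₁ hx₂),
    integral_sub_smul_deriv_eq b (hf_on hx₂ hb) (hf'_int hx₂ hb), hsplit]
  module

end

theorem stmt4 {X : Type*} [NormedAddCommGroup X] [NormedSpace ℝ X] [CompleteSpace X]
    {a b : ℝ} (hab : a < b) {f f' : ℝ → X}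
    (hderiv : ∀ t ∈ Set.Icc a b, HasDerivAt f (f' t) t)
    (hint : IntervalIntegrable f' volume a b) {x₁ x₂ p₁ p₂ : ℝ} (hx₁ : a ≤ x₁) (hx₁₂ : x₁ ≤ x₂) (hx₂ : x₂ ≤ b)
    (hp : p₁ + p₂ = 1) :
    p₁ • f x₁ + p₂ • f x₂ - (b - a)⁻¹ • (∫ t in a..b, f t) =
      (b - a)⁻¹ • ((∫ t in a..x₁, (t - a) • f' t) +
        (∫ t in x₁..x₂, (t - (p₁ * b + p₂ * a)) • f' t) +
        (∫ t in x₂..b, (t - b) • f' t)) := by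
  rw [← Set.uIcc_of_le hab.le] at hderiv
  rw [integral_sub_smul_deriv_three_pieces_eq _ hderiv hint
    (Set.mem_uIcc_of_le hx₁ (hx₁₂.trans hx₂)) (Set.mem_uIcc_of_le (hx₁.trans hx₁₂) hx₂)]
  have hba : b - a ≠ 0 := sub_ne_zero.mpr hab.ne'
  obtain rfl : p₂ = 1 - p₁ := by linarith
  match_scalars <;> field_simp <;> ring
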